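/- Let M, N ∈ ℝⁿˣⁿ be fixed matrices and δ > 0. If X ∈ Sⁿ (symmetric) satisfies X ⪰ δ(-K₁ₗM - K₂ₗN) and X ⪰ δ(K₁ₗM - K₂ₗN) interpreted as X ⪰ Sym of those matrices, for all l ∈ {1,...,4} (with K as defined), then for every (a, b) ∈ ℝ² with a² + b² ≤ δ², the symmetric matrix Sym(aM + bN) ⪰ -X, where Sym(A) = (A + Aᵀ)/2. -/

import Mathlib

open Matrix

/-- The fixed 2×4 matrix `K` from the paper. -/
noncomputable def Kmat : Matrix (Fin 2) (Fin 4) ℝ :=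
  !![1 - Real.sqrt 2, -1, -1, 1 - Real.sqrt 2;
     1, Real.sqrt 2 - 1, 1 - Real.sqrt 2, -1]

/-- Symmetrization of a square matrix: `Sym(A) = (A + Aᵀ)/2`. -/
noncomputable def symPart {n : ℕ} (A : Matrix (Fin n) (Fin n) ℝ) : Matrix (Fin n) (Fin n) ℝ :=
  (1 / 2 : ℝ) • (A + Aᵀ)

/-!
The eight columns `±(K₁ₗ, K₂ₗ)` are the vertices `(±1, ±r)`, `(±r, ±1)`, `r = √2 - 1`, of a
regular octagon circumscribed about the unit circle. Testing the hypotheses against a vector `v`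
and writing `m, k, x` for the quadratic forms of `M, N, X` at `v`, they say that the support
function of the octagon at `δ (m, k)` is at most `x`. Since the octagon contains the unit disk,
`δ ‖(m, k)‖ ≤ x`, and Cauchy–Schwarz gives `-(a m + b k) ≤ x` whenever `a² + b² ≤ δ²`.
-/

lemma abs_add_mul_abs_le {r m n t : ℝ} (h₁ : m + r * n ≤ t)
    (h₂ : m - r * n ≤ t) (h₃ : -m + r * n ≤ t) (h₄ : -m - r * n ≤ t) :
    |m| + r * |n| ≤ t := by
  rcases abs_cases m with ⟨hm, -⟩ | ⟨hm, -⟩ <;> rcases abs_cases n with ⟨hn, -⟩ | ⟨hn, -⟩ <;>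
    rw [hm, hn] <;> linarith

lemma sq_add_sq_le_sq_of_abs_add_mul_abs_le {r m n s : ℝ} (hr : 0 ≤ r) (hr₁ : r ^ 2 + 2 * r = 1)
    (hmn : |m| + r * |n| ≤ s) (hnm : |n| + r * |m| ≤ s) : m ^ 2 + n ^ 2 ≤ s ^ 2 := by
  wlog hle : |n| ≤ |m| generalizing m n
  · linarith [this hnm hmn (le_of_not_ge hle)]
  have hs : 0 ≤ |m| + r * |n| := by positivity
  calc m ^ 2 + n ^ 2 = |m| ^ 2 + (r ^ 2 + 2 * r) * |n| ^ 2 := by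
        rw [hr₁, sq_abs, sq_abs, one_mul]
    _ ≤ (|m| + r * |n|) ^ 2 := by
        nlinarith [mul_le_mul_of_nonneg_left hle (by positivity : 0 ≤ r * |n|)]
    _ ≤ s ^ 2 := pow_le_pow_left₀ hs hmn 2

lemma neg_le_mul_add_mul_of_sq_add_sq_le {a b m n δ s : ℝ} (hab : a ^ 2 + b ^ 2 ≤ δ ^ 2)
    (hs : 0 ≤ s) (hmn : (δ * m) ^ 2 + (δ * n) ^ 2 ≤ s ^ 2) : -s ≤ a * m + b * n := by
  refine (abs_le_of_sq_le_sq' ?_ hs).1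
  calc (a * m + b * n) ^ 2 ≤ (a ^ 2 + b ^ 2) * (m ^ 2 + n ^ 2) := by
        nlinarith [sq_nonneg (a * n - b * m)]
    _ ≤ δ ^ 2 * (m ^ 2 + n ^ 2) := by gcongr
    _ = (δ * m) ^ 2 + (δ * n) ^ 2 := by ring
    _ ≤ s ^ 2 := hmn

lemma sqrt_two_sub_one_sq_add : (Real.sqrt 2 - 1) ^ 2 + 2 * (Real.sqrt 2 - 1) = 1 := by
  nlinarith [Real.sq_sqrt (show (0 : ℝ) ≤ 2 by norm_num)]

section SymPart

variable {n : ℕ}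

lemma dotProduct_symPart_mulVec (A : Matrix (Fin n) (Fin n) ℝ) (v : Fin n → ℝ) :
    v ⬝ᵥ (symPart A *ᵥ v) = v ⬝ᵥ (A *ᵥ v) := by
  rw [symPart, smul_mulVec, add_mulVec, dotProduct_smul, dotProduct_add,
    dotProduct_transpose_mulVec, smul_eq_mul]
  ring

lemma isSymm_symPart (A : Matrix (Fin n) (Fin n) ℝ) : (symPart A).IsSymm := by
  rw [symPart, IsSymm, transpose_smul, transpose_add, transpose_transpose, add_comm]

lemma dotProduct_mulVec_le_of_posSemidef_sub_symPart {A X : Matrix (Fin n) (Fin n) ℝ}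
    (h : (X - symPart A).PosSemidef) (v : Fin n → ℝ) :
    v ⬝ᵥ (A *ᵥ v) ≤ v ⬝ᵥ (X *ᵥ v) := by
  have := h.dotProduct_mulVec_nonneg v
  rw [star_trivial, sub_mulVec, dotProduct_sub, dotProduct_symPart_mulVec] at this
  linarith

lemma posSemidef_symPart_add {A X : Matrix (Fin n) (Fin n) ℝ} (hX : X.IsSymm)
    (h : ∀ v, 0 ≤ v ⬝ᵥ (A *ᵥ v) + v ⬝ᵥ (X *ᵥ v)) : (symPart A + X).PosSemidef := by
  refine .of_dotProduct_mulVec_nonneg ?_ fun v => ?_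
  · exact isHermitian_iff_isSymm.2 ((isSymm_symPart A).add hX)
  · rw [star_trivial, add_mulVec, dotProduct_add, dotProduct_symPart_mulVec]
    exact h v

end SymPart

theorem symPart_lower_bound_from_K_constraints_general {n : ℕ}
    (M N X : Matrix (Fin n) (Fin n) ℝ) (δ : ℝ)
    (hX : X.IsSymm)
    (h1 : ∀ l : Fin 4,
      (X - symPart (δ • ((-Kmat 0 l) • M - Kmat 1 l • N))).PosSemidef)
    (h2 : ∀ l : Fin 4,
      (X - symPart (δ • (Kmat 0 l • M - Kmat 1 l • N))).PosSemidef) :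
    ∀ a b : ℝ, a ^ 2 + b ^ 2 ≤ δ ^ 2 →
      (symPart (a • M + b • N) + X).PosSemidef := by
  intro a b hab
  refine posSemidef_symPart_add hX fun v => ?_
  set m := v ⬝ᵥ (M *ᵥ v)
  set k := v ⬝ᵥ (N *ᵥ v)
  set x := v ⬝ᵥ (X *ᵥ v)
  have hq : ∀ c d : ℝ, (X - symPart (δ • (c • M - d • N))).PosSemidef →
      δ * (c * m - d * k) ≤ x := fun c d h => by
    simpa only [smul_mulVec, sub_mulVec, dotProduct_smul, dotProduct_sub, smul_eq_mul]
      using dotProduct_mulVec_le_of_posSemidef_sub_symPart h v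
  have e1 := fun l => hq _ _ (h1 l)
  have e2 := fun l => hq _ _ (h2 l)
  simp only [Kmat, Fin.isValue, of_apply, cons_val', cons_val_fin_one, cons_val_zero, neg_mul,
    cons_val_one, Fin.forall_fin_succ, one_mul, cons_val_succ, neg_neg, sub_neg_eq_add,
    forall_const] at e1 e2
  obtain ⟨_, _, _, _⟩ := e1
  obtain ⟨_, _, _, _⟩ := e2
  simp only [add_mulVec, smul_mulVec, dotProduct_add, dotProduct_smul, smul_eq_mul]
  have hr : 0 ≤ √2 - 1 := sub_nonneg.2 Real.one_lt_sqrt_two.le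
  have hmn : |δ * m| + (√2 - 1) * |δ * k| ≤ x :=
    abs_add_mul_abs_le (by linarith) (by linarith) (by linarith) (by linarith)
  have hkm : |δ * k| + (√2 - 1) * |δ * m| ≤ x :=
    abs_add_mul_abs_le (by linarith) (by linarith) (by linarith) (by linarith)
  have hx : 0 ≤ x := le_trans (by positivity) hmn
  linarith [neg_le_mul_add_mul_of_sq_add_sq_le hab hx
    (sq_add_sq_le_sq_of_abs_add_mul_abs_le hr sqrt_two_sub_one_sq_add hmn hkm)]

/-- If a symmetric matrix `X` dominates `Sym(δ(±K₁ₗ M - K₂ₗ N))` for `l = 1,…,4`,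
then for every `(a, b)` with `a² + b² ≤ δ²` we have `Sym(aM + bN) ⪰ -X`. -/
theorem symPart_lower_bound_from_K_constraints {n : ℕ}
    (M N X : Matrix (Fin n) (Fin n) ℝ) (δ : ℝ) (hδ : 0 < δ)
    (hX : X.IsSymm)
    (h1 : ∀ l : Fin 4,
      (X - symPart (δ • ((-Kmat 0 l) • M - Kmat 1 l • N))).PosSemidef)
    (h2 : ∀ l : Fin 4,
      (X - symPart (δ • (Kmat 0 l • M - Kmat 1 l • N))).PosSemidef) :
    ∀ a b : ℝ, a ^ 2 + b ^ 2 ≤ δ ^ 2 →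
      (symPart (a • M + b • N) + X).PosSemidef :=
  symPart_lower_bound_from_K_constraints_general M N X δ hX h1 h2
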